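/- If C(0) ∈ [0,1]^N, then each component of the solution of the SCS model satisfies, for all t ≥ 0, C_i(t) ≤ max(C_i(0), K_i/(K_i + γ w_i)), where K_i = (1/(δ w_i))(α x_i + β Σ_j a_{ji}); equivalently, C_i'(t) < 0 whenever C_i(t) > K_i/(K_i + γ w_i) and C(t) ∈ [0,1]^N. -/

import Mathlib

open Set Filter Topology

/-- The right-hand side of the SCS model. -/
noncomputable def scsF {N : ℕ} (a : Fin N → Fin N → ℝ) (w x : Fin N → ℝ) (α β δ γ : ℝ)
    (C : Fin N → ℝ) : Fin N → ℝ :=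
  fun i => (1 / (δ * w i)) * (α * x i + β * ∑ j, a j i * C j) * (1 - C i) - γ * w i * C i

set_option maxHeartbeats 1000000 in
/-- Dissipative bound for the SCS model: with K_i = (1/(δ w_i))(α x_i + β Σ_j a_{ji}),
if C(0) ∈ [0,1]^N then C_i(t) ≤ max(C_i(0), K_i/(K_i + γ w_i)) for all t ≥ 0;
equivalently, C_i'(t) < 0 whenever C(t) ∈ [0,1]^N and C_i(t) > K_i/(K_i + γ w_i). -/
theorem scs_dissipative_bound {N : ℕ} (a : Fin N → Fin N → ℝ)
    (ha : ∀ i j, a i j = 0 ∨ a i j = 1)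
    (w x : Fin N → ℝ) (α β δ γ : ℝ)
    (hα : 0 < α) (hβ : 0 < β) (hδ : 0 < δ) (hγ : 0 < γ)
    (hx : ∀ i, 0 ≤ x i) (hw : ∀ i, 0 < w i)
    (C : ℝ → Fin N → ℝ)
    (hC : ∀ t, 0 ≤ t → HasDerivAt C (scsF a w x α β δ γ (C t)) t)
    (h0box : ∀ i, C 0 i ∈ Set.Icc (0 : ℝ) 1)
    (K : Fin N → ℝ)
    (hK : ∀ i, K i = (1 / (δ * w i)) * (α * x i + β * ∑ j, a j i)) :
    (∀ t, 0 ≤ t → ∀ i, C t i ≤ max (C 0 i) (K i / (K i + γ * w i))) ∧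
    (∀ t, 0 ≤ t → ∀ i, (∀ j, C t j ∈ Set.Icc (0 : ℝ) 1) →
      K i / (K i + γ * w i) < C t i → scsF a w x α β δ γ (C t) i < 0) := by
  classical
  have hA0 : ∀ i j, (0:ℝ) ≤ a i j := fun i j => by rcases ha i j with h | h <;> simp [h]
  have hv : ∀ i, (0:ℝ) < δ * w i := fun i => mul_pos hδ (hw i)
  have hγw : ∀ i, (0:ℝ) < γ * w i := fun i => mul_pos hγ (hw i)
  have hn0 : ∀ i, (0:ℝ) ≤ ∑ j, a j i := fun i => Finset.sum_nonneg fun j _ => hA0 j i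
  have hK0 : ∀ i, 0 ≤ K i := fun i => by
    rw [hK i]
    have h1 := hx i
    have h2 := hn0 i
    have h3 := (hv i).le
    have : (0:ℝ) ≤ α * x i + β * ∑ j, a j i := by
      have := mul_nonneg hα.le h1
      have := mul_nonneg hβ.le h2
      linarith
    positivity
  have hden : ∀ i, 0 < K i + γ * w i := fun i => add_pos_of_nonneg_of_pos (hK0 i) (hγw i)
  have hρK : ∀ i, (K i + γ * w i) * (K i / (K i + γ * w i)) = K i := fun i =>
    mul_div_cancel₀ _ (hden i).ne'
  have hρ1 : ∀ i, K i / (K i + γ * w i) < 1 := fun i =>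
    (div_lt_one (hden i)).2 (lt_add_of_pos_right _ (hγw i))
  have hρ0 : ∀ i, 0 ≤ K i / (K i + γ * w i) := fun i => div_nonneg (hK0 i) (hden i).le
  have hCc : ∀ t, 0 ≤ t → ∀ i, HasDerivAt (fun s => C s i) (scsF a w x α β δ γ (C t) i) t :=
    fun t ht i => hasDerivAt_pi.1 (hC t ht) i
  -- Part 2 : pointwise strict decrease above the threshold
  have part2 : ∀ t, 0 ≤ t → ∀ i, (∀ j, C t j ∈ Set.Icc (0:ℝ) 1) →
      K i / (K i + γ * w i) < C t i → scsF a w x α β δ γ (C t) i < 0 := by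
    intro t ht i hbox hlt
    have hS1 : ∑ j, a j i * C t j ≤ ∑ j, a j i := by
      calc ∑ j, a j i * C t j ≤ ∑ j, a j i * 1 :=
            Finset.sum_le_sum fun j _ => mul_le_mul_of_nonneg_left (hbox j).2 (hA0 j i)
        _ = ∑ j, a j i := by simp
    have hPK : (1/(δ*w i)) * (α * x i + β * ∑ j, a j i * C t j) ≤ K i := by
      rw [hK i]
      have hinner : α * x i + β * ∑ j, a j i * C t j ≤ α * x i + β * ∑ j, a j i := by
        have := mul_le_mul_of_nonneg_left hS1 hβ.le
        linarith
      exact mul_le_mul_of_nonneg_left hinner (le_of_lt (div_pos one_pos (hv i)))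
    have h1C : 0 ≤ 1 - C t i := by linarith [(hbox i).2]
    have t1 := mul_le_mul_of_nonneg_right hPK h1C
    have t2 := mul_lt_mul_of_pos_left hlt (hden i)
    have t3 := hρK i
    simp only [scsF]
    linarith [t1, t2, t3]
  refine ⟨?_, part2⟩
  intro t₀ ht₀ i
  -- constants
  obtain ⟨c, hcdef⟩ : ∃ c : Fin N → ℝ, c = fun j => β * (∑ k, a k j) * (1 / (δ * w j)) :=
    ⟨_, rfl⟩
  have hc0 : ∀ j, 0 ≤ c j := by
    intro j
    simp only [hcdef]
    exact mul_nonneg (mul_nonneg hβ.le (hn0 j)) (le_of_lt (div_pos one_pos (hv j)))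
  have hune : (Finset.univ : Finset (Fin N)).Nonempty := ⟨i, Finset.mem_univ i⟩
  obtain ⟨L, hLdef⟩ : ∃ L : ℝ, L = 1 + Finset.univ.sup' hune (fun j => 2 * c j) := ⟨_, rfl⟩
  have hLc : ∀ j, 2 * c j + 1 ≤ L := by
    intro j
    have := Finset.le_sup' (fun j => 2 * c j) (Finset.mem_univ j)
    simp only [hLdef]; linarith
  have hL0 : 0 < L := by have h1 := hLc i; have h2 := hc0 i; linarith
  obtain ⟨M, hMdef⟩ : ∃ M : Fin N → ℝ, M = fun j => max (C 0 j) (K j / (K j + γ * w j)) :=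
    ⟨_, rfl⟩
  have hMi : M i = max (C 0 i) (K i / (K i + γ * w i)) := by simp only [hMdef]
  have hM1 : ∀ j, M j ≤ 1 := by
    intro j; simp only [hMdef]; exact max_le (h0box j).2 (hρ1 j).le
  have hM0 : ∀ j, 0 ≤ M j := by
    intro j; simp only [hMdef]; exact le_max_of_le_left (h0box j).1
  have hρM : ∀ j, K j / (K j + γ * w j) ≤ M j := by
    intro j; simp only [hMdef]; exact le_max_right _ _
  have hC0M : ∀ j, C 0 j ≤ M j := by
    intro j; simp only [hMdef]; exact le_max_left _ _
  rw [← hMi]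
  -- key estimate with exponential fence
  have key : ∀ ε : ℝ, 0 < ε → ε * Real.exp (L * t₀) ≤ 1 →
      C t₀ i ≤ M i + ε * Real.exp (L * t₀) := by
    intro ε hε hεT
    obtain ⟨E, hEdef⟩ : ∃ E : ℝ → ℝ, E = fun s => ε * Real.exp (L * s) := ⟨_, rfl⟩
    have hE0 : ∀ s, 0 < E s := fun s => by
      simp only [hEdef]; exact mul_pos hε (Real.exp_pos _)
    have hE1 : ∀ s, s ≤ t₀ → E s ≤ 1 := by
      intro s hs
      have h1 : E s ≤ E t₀ := by
        simp only [hEdef]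
        exact mul_le_mul_of_nonneg_left
          (Real.exp_le_exp.2 (mul_le_mul_of_nonneg_left hs hL0.le)) hε.le
      have hEt₀ : E t₀ = ε * Real.exp (L * t₀) := by simp only [hEdef]
      rw [hEt₀] at h1
      exact h1.trans hεT
    have hEderiv : ∀ s, HasDerivAt E (L * E s) s := by
      intro s
      have h1 : HasDerivAt (fun u : ℝ => L * u) (L * 1) s := (hasDerivAt_id s).const_mul L
      have h2 := (h1.exp).const_mul ε
      simp only [hEdef]
      exact h2.congr_deriv (by ring)
    obtain ⟨h, hhdef⟩ : ∃ h : Fin N × Bool → ℝ → ℝ,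
        h = fun k s => if k.2 then C s k.1 - M k.1 else -(C s k.1) := ⟨_, rfl⟩
    obtain ⟨d, hddef⟩ : ∃ d : Fin N × Bool → ℝ → ℝ,
        d = fun k s => if k.2 then scsF a w x α β δ γ (C s) k.1
          else -(scsF a w x α β δ γ (C s) k.1) := ⟨_, rfl⟩
    have hpne : (Finset.univ : Finset (Fin N × Bool)).Nonempty := ⟨(i, true), Finset.mem_univ _⟩
    obtain ⟨g, hgdef⟩ : ∃ g : ℝ → ℝ, g = fun s => Finset.univ.sup' hpne (fun k => h k s) :=
      ⟨_, rfl⟩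
    have hhd : ∀ s, 0 ≤ s → ∀ k, HasDerivAt (h k) (d k s) s := by
      intro s hs k
      obtain ⟨j, b⟩ := k
      have hj := hCc s hs j
      cases b
      · simpa [hhdef, hddef] using hj.fun_neg
      · simpa [hhdef, hddef] using hj.sub_const (M j)
    have hgcont : ContinuousOn g (Icc 0 t₀) := by
      simp only [hgdef]
      intro s hs
      exact (ContinuousAt.finset_sup'_apply hpne
        fun k _ => (hhd s hs.1 k).continuousAt).continuousWithinAt
    obtain ⟨f', hf'def⟩ : ∃ f' : ℝ → ℝ, f' = fun s =>
      Finset.univ.sup' hpne (fun k => if h k s = g s then d k s else L * E s - 1) := ⟨_, rfl⟩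
    have ha0 : g 0 ≤ E 0 := by
      simp only [hgdef]
      apply Finset.sup'_le
      intro k _
      have hE00 : 0 < E 0 := hE0 0
      obtain ⟨j, b⟩ := k
      cases b
      · have := (h0box j).1
        simp only [hhdef, Bool.false_eq_true, if_false]
        show -C 0 j ≤ E 0
        linarith
      · have := hC0M j
        simp only [hhdef, if_true]
        show C 0 j - M j ≤ E 0
        linarith
    have hf'bound : ∀ s ∈ Ico 0 t₀, ∀ r, f' s < r →
        ∃ᶠ z in 𝓝[>] s, slope g s z < r := by
      intro s hs r hr
      apply Filter.Eventually.frequently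
      have hzs : ∀ᶠ z in 𝓝[>] s, s < z := eventually_mem_nhdsWithin
      have hper : ∀ k : Fin N × Bool, ∀ᶠ z in 𝓝[>] s, h k z - g s < r * (z - s) := by
        intro k
        by_cases hk : h k s = g s
        · have hdk : d k s < r := by
            refine lt_of_le_of_lt ?_ hr
            have h1 := Finset.le_sup'
              (fun k => if h k s = g s then d k s else L * E s - 1) (Finset.mem_univ k)
            rw [if_pos hk] at h1
            simp only [hf'def]
            exact h1
          have hts : Tendsto (slope (h k) s) (𝓝[>] s) (𝓝 (d k s)) :=
            (hasDerivAt_iff_tendsto_slope.1 (hhd s hs.1 k)).mono_left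
              (nhdsWithin_mono _ fun z hz => ne_of_gt hz)
          filter_upwards [hts.eventually_lt_const hdk, hzs] with z h1 h2
          rw [slope_def_field, div_lt_iff₀ (by linarith : (0:ℝ) < z - s)] at h1
          linarith [h1]
        · have hle : h k s ≤ g s := by
            simp only [hgdef]; exact Finset.le_sup' (fun k => h k s) (Finset.mem_univ k)
          have hlt : h k s < g s := lt_of_le_of_ne hle hk
          have hq0 : 0 < g s - h k s := by linarith
          have hcontk : Tendsto (h k) (𝓝 s) (𝓝 (h k s)) := (hhd s hs.1 k).continuousAt
          have h1 : ∀ᶠ z in 𝓝 s, h k z < g s - (g s - h k s) / 2 :=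
            hcontk.eventually_lt_const (by linarith)
          have h2 : ∀ᶠ z in 𝓝 s, |z - s| < (g s - h k s) / (2 * (|r| + 1)) :=
            eventually_abs_sub_lt s (div_pos hq0 (by positivity))
          filter_upwards [h1.filter_mono nhdsWithin_le_nhds,
            h2.filter_mono nhdsWithin_le_nhds, hzs] with z hz1 hz2 hz3
          have hzs' : 0 < z - s := by linarith
          have habs : z - s < (g s - h k s) / (2 * (|r| + 1)) := by
            rw [abs_of_pos hzs'] at hz2; exact hz2
          have hr1 : (0:ℝ) < |r| + 1 := by positivity
          have t1 := mul_lt_mul_of_pos_left habs hr1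
          have t2 : (|r| + 1) * ((g s - h k s) / (2 * (|r| + 1))) = (g s - h k s) / 2 := by
            field_simp
          rw [t2] at t1
          have t3 : -|r| * (z - s) ≤ r * (z - s) :=
            mul_le_mul_of_nonneg_right (neg_abs_le r) hzs'.le
          nlinarith [t1, t3, hz1, hzs']
      have hall : ∀ᶠ z in 𝓝[>] s, ∀ k : Fin N × Bool, h k z - g s < r * (z - s) :=
        eventually_all.2 hper
      filter_upwards [hall, hzs] with z h1 h2
      rw [slope_def_field, div_lt_iff₀ (by linarith : (0:ℝ) < z - s)]
      have hgz : g z < g s + r * (z - s) := by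
        have h3 : ∀ k ∈ Finset.univ, h k z < g s + r * (z - s) := fun k _ => by linarith [h1 k]
        calc g z = Finset.univ.sup' hpne (fun k => h k z) := by simp only [hgdef]
          _ < g s + r * (z - s) := (Finset.sup'_lt_iff hpne).2 h3
      linarith
    have hbound : ∀ s ∈ Ico 0 t₀, g s = E s → f' s < L * E s := by
      intro s hs hgE
      rw [hf'def, Finset.sup'_lt_iff]
      intro k _
      by_cases hk : h k s = g s
      · rw [if_pos hk]
        have hEs0 : 0 < E s := hE0 s
        have hEs1 : E s ≤ 1 := hE1 s hs.2.le
        have hup : ∀ j, C s j ≤ M j + E s := by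
          intro j
          have h1 : h (j, true) s ≤ g s := by
            simp only [hgdef]; exact Finset.le_sup' (fun k => h k s) (Finset.mem_univ (j, true))
          rw [hgE, hhdef] at h1
          replace h1 : C s j - M j ≤ E s := h1
          linarith
        have hdn : ∀ j, -(E s) ≤ C s j := by
          intro j
          have h1 : h (j, false) s ≤ g s := by
            simp only [hgdef]; exact Finset.le_sup' (fun k => h k s) (Finset.mem_univ (j, false))
          rw [hgE, hhdef] at h1
          replace h1 : -C s j ≤ E s := h1
          linarith
        obtain ⟨j, b⟩ := k
        have hiv : (0:ℝ) < 1 / (δ * w j) := div_pos one_pos (hv j)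
        have hcj : c j = β * (∑ k, a k j) * (1 / (δ * w j)) := by simp only [hcdef]
        have hSle : (∑ kk, a kk j * C s kk) ≤ (∑ kk, a kk j) * (1 + E s) := by
          calc (∑ kk, a kk j * C s kk) ≤ ∑ kk, a kk j * (1 + E s) :=
                Finset.sum_le_sum fun kk _ => mul_le_mul_of_nonneg_left
                  (by have := hup kk; have := hM1 kk; linarith) (hA0 kk j)
            _ = (∑ kk, a kk j) * (1 + E s) := by rw [Finset.sum_mul]
        have hSge : -((∑ kk, a kk j) * E s) ≤ (∑ kk, a kk j * C s kk) := by
          calc -((∑ kk, a kk j) * E s) = ∑ kk, a kk j * (-(E s)) := by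
                rw [← Finset.sum_mul]; ring
            _ ≤ ∑ kk, a kk j * C s kk :=
                Finset.sum_le_sum fun kk _ =>
                  mul_le_mul_of_nonneg_left (hdn kk) (hA0 kk j)
        have hKj : K j = (1 / (δ * w j)) * (α * x j + β * ∑ kk, a kk j) := hK j
        have hLEs : (2 * c j + 1) * E s ≤ L * E s :=
          mul_le_mul_of_nonneg_right (hLc j) hEs0.le
        cases b
        · -- lower boundary : C s j = -(E s)
          rw [hgE, hhdef] at hk
          replace hk : -C s j = E s := hk
          have hCj : C s j = -(E s) := by linarith
          simp only [hddef, Bool.false_eq_true, if_false, scsF]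
          rw [hCj]
          have hP0 : -(c j * E s) ≤ (1/(δ*w j)) * (α * x j + β * ∑ kk, a kk j * C s kk) := by
            have h1 : β * (-((∑ kk, a kk j) * E s)) ≤ β * ∑ kk, a kk j * C s kk :=
              mul_le_mul_of_nonneg_left hSge hβ.le
            have h2 : 0 ≤ α * x j := mul_nonneg hα.le (hx j)
            have h3 := mul_le_mul_of_nonneg_left
              (show -(β * ((∑ kk, a kk j) * E s)) ≤ α * x j + β * ∑ kk, a kk j * C s kk by
                linarith) hiv.le
            calc -(c j * E s) = (1/(δ*w j)) * (-(β * ((∑ kk, a kk j) * E s))) := by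
                  rw [hcj]; ring
              _ ≤ _ := h3
          have v1 := mul_le_mul_of_nonneg_right hP0 (show (0:ℝ) ≤ 1 + E s by linarith)
          have v2 : c j * E s * E s ≤ c j * E s * 1 :=
            mul_le_mul_of_nonneg_left hEs1 (mul_nonneg (hc0 j) hEs0.le)
          have v3 : 0 < γ * w j * E s := mul_pos (hγw j) hEs0
          linarith [v1, v2, v3, hLEs, hEs0, mul_nonneg (hc0 j) hEs0.le]
        · -- upper boundary : C s j = M j + E s
          rw [hgE, hhdef] at hk
          replace hk : C s j - M j = E s := hk
          have hCj : C s j = M j + E s := by linarith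
          simp only [hddef, if_true, scsF]
          rw [hCj]
          have hPK : (1/(δ*w j)) * (α * x j + β * ∑ kk, a kk j * C s kk) - K j
              ≤ c j * E s := by
            have h1 : β * (∑ kk, a kk j * C s kk) - β * (∑ kk, a kk j)
                ≤ β * ((∑ kk, a kk j) * E s) := by
              have := mul_le_mul_of_nonneg_left hSle hβ.le
              linarith [this]
            have h3 := mul_le_mul_of_nonneg_left h1 hiv.le
            rw [hKj]
            calc (1/(δ*w j)) * (α * x j + β * ∑ kk, a kk j * C s kk)
                  - (1 / (δ * w j)) * (α * x j + β * ∑ kk, a kk j)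
                = (1/(δ*w j)) * (β * (∑ kk, a kk j * C s kk) - β * (∑ kk, a kk j)) := by ring
              _ ≤ (1/(δ*w j)) * (β * ((∑ kk, a kk j) * E s)) :=
                  mul_le_mul_of_nonneg_left h1 hiv.le
              _ = c j * E s := by rw [hcj]; ring
          have hKP : K j - (1/(δ*w j)) * (α * x j + β * ∑ kk, a kk j * C s kk)
              ≤ c j * (1 + E s) := by
            have h1 : β * (∑ kk, a kk j) - β * (∑ kk, a kk j * C s kk)
                ≤ β * ((∑ kk, a kk j) * (1 + E s)) := by
              have := mul_le_mul_of_nonneg_left hSge hβ.le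
              linarith [this]
            rw [hKj]
            calc (1 / (δ * w j)) * (α * x j + β * ∑ kk, a kk j)
                  - (1/(δ*w j)) * (α * x j + β * ∑ kk, a kk j * C s kk)
                = (1/(δ*w j)) * (β * (∑ kk, a kk j) - β * (∑ kk, a kk j * C s kk)) := by ring
              _ ≤ (1/(δ*w j)) * (β * ((∑ kk, a kk j) * (1 + E s))) :=
                  mul_le_mul_of_nonneg_left h1 hiv.le
              _ = c j * (1 + E s) := by rw [hcj]; ring
          rcases le_or_gt (M j + E s) 1 with hcase | hcase
          · have t1 : (1/(δ*w j)) * (α * x j + β * ∑ kk, a kk j * C s kk) * (1 - (M j + E s))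
                ≤ (K j + c j * E s) * (1 - (M j + E s)) :=
              mul_le_mul_of_nonneg_right (by linarith [hPK]) (by linarith)
            have t2 : (K j + γ * w j) * (K j / (K j + γ * w j) + E s)
                ≤ (K j + γ * w j) * (M j + E s) :=
              mul_le_mul_of_nonneg_left (by linarith [hρM j]) (hden j).le
            have t3 : 0 ≤ c j * E s * (M j + E s) :=
              mul_nonneg (mul_nonneg (hc0 j) hEs0.le) (by linarith [hM0 j])
            have tK : 0 ≤ K j * E s := mul_nonneg (hK0 j) hEs0.le
            have tγ : 0 < γ * w j * E s := mul_pos (hγw j) hEs0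
            linarith [t1, t2, t3, hρK j, tK, tγ, hLEs, hEs0, mul_nonneg (hc0 j) hEs0.le]
          · have u1 : (K j - c j * (1 + E s)) * ((M j + E s) - 1)
                ≤ (1/(δ*w j)) * (α * x j + β * ∑ kk, a kk j * C s kk) * ((M j + E s) - 1) :=
              mul_le_mul_of_nonneg_right (by linarith [hKP]) (by linarith)
            have u2 : c j * (1 + E s) * ((M j + E s) - 1) ≤ (c j * (1 + E s)) * E s :=
              mul_le_mul_of_nonneg_left (by linarith [hM1 j])
                (mul_nonneg (hc0 j) (by linarith))
            have u2' : c j * (1 + E s) * E s ≤ c j * 2 * E s := by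
              have := mul_le_mul_of_nonneg_left hEs1 (mul_nonneg (hc0 j) hEs0.le)
              linarith [this]
            have u3 : 0 ≤ K j * ((M j + E s) - 1) := mul_nonneg (hK0 j) (by linarith)
            have u4 : 0 < γ * w j * (M j + E s) := mul_pos (hγw j) (by linarith [hM0 j])
            linarith [u1, u2, u2', u3, u4, hLEs, hEs0]
      · rw [if_neg hk]
        linarith [hE0 s]
    have main := image_le_of_liminf_slope_right_lt_deriv_boundary (f' := f')
      (B' := fun s => L * E s) hgcont hf'bound ha0 hEderiv hbound
    have hgt : g t₀ ≤ E t₀ := main (right_mem_Icc.2 ht₀)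
    have hle : C t₀ i - M i ≤ g t₀ := by
      have h1 : h (i, true) t₀ ≤ g t₀ := by
        simp only [hgdef]; exact Finset.le_sup' (fun k => h k t₀) (Finset.mem_univ (i, true))
      simpa [hhdef] using h1
    have hEt : E t₀ = ε * Real.exp (L * t₀) := by simp only [hEdef]
    rw [hEt] at hgt
    linarith
  -- conclude by letting ε → 0
  by_contra hcon
  push_neg at hcon
  have hη0 : 0 < C t₀ i - M i := by linarith
  have hexp : 0 < Real.exp (L * t₀) := Real.exp_pos _
  obtain ⟨ε, hεdef⟩ : ∃ ε : ℝ, ε = min ((C t₀ i - M i) / 2) 1 / Real.exp (L * t₀) := ⟨_, rfl⟩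
  have hε0 : 0 < ε := by
    simp only [hεdef]
    exact div_pos (lt_min (by linarith) one_pos) hexp
  have hεe : ε * Real.exp (L * t₀) = min ((C t₀ i - M i) / 2) 1 := by
    simp only [hεdef]
    exact div_mul_cancel₀ _ hexp.ne'
  have h1 : ε * Real.exp (L * t₀) ≤ 1 := by rw [hεe]; exact min_le_right _ _
  have h2 := key ε hε0 h1
  rw [hεe] at h2
  have h3 : min ((C t₀ i - M i) / 2) 1 ≤ (C t₀ i - M i) / 2 := min_le_left _ _
  linarith
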